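/- Let B, C ∈ B(H). Then w([[0, B], [C, 0]])² ≥ (1/8)·[ max{ ‖B + C*‖², ‖B − C*‖² } + ‖B + C*‖·‖B − C*‖ ] ≥ (1/4)·max{ ‖|B|² + |C*|²‖, ‖|B*|² + |C|²‖ }. -/

import Mathlib

/-!
Evaluating the quadratic form of `T = [[0, B], [C, 0]]` at `(y, x)` and at `(i y, x)` gives
`re ⟪(B + C*) x, y⟫ = re ⟪T (y, x), (y, x)⟫` and `re ⟪(B - C*) x, y⟫ = im ⟪T (i y, x), (i y, x)⟫`,
both at most `w(T) (‖x‖² + ‖y‖²)`; hence `‖B ± C*‖ ≤ 2 w(T)`, which is the first inequality.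
For the second, the parallelogram identity
`(B + C*)* (B + C*) + (B - C*)* (B - C*) = 2 (B* B + C C*)` and the C*-identity `‖S* S‖ = ‖S‖²`
give `2 ‖|B|² + |C*|²‖ ≤ ‖B + C*‖² + ‖B - C*‖²`, likewise for `|B*|² + |C|²`, and
`a² + b² ≤ max(a², b²) + a b` for `a, b ≥ 0`.
-/

open ContinuousLinearMap

variable {H : Type*} [NormedAddCommGroup H] [InnerProductSpace ℂ H] [CompleteSpace H]

/-- The numerical radius of a bounded linear operator:
`w(T) = sup { |⟨Tx, x⟩| : ‖x‖ = 1 }`. -/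
noncomputable def numRadius {E : Type*} [NormedAddCommGroup E] [InnerProductSpace ℂ E]
    (T : E →L[ℂ] E) : ℝ :=
  sSup {r : ℝ | ∃ x : E, ‖x‖ = 1 ∧ r = ‖(inner ℂ (T x) x : ℂ)‖}

/-- The absolute value `|T| = (T*T)^(1/2)` of a bounded linear operator.
Note `opAbs (adjoint T) = (T T*)^(1/2) = |T*|`. -/
noncomputable def opAbs (T : H →L[ℂ] H) : H →L[ℂ] H := CFC.sqrt (adjoint T * T)

/-- The off-diagonal operator matrix `[[0, B], [C, 0]]` acting on `H ⊕ H`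
(with the Hilbert space structure `WithLp 2 (H × H)`) by `(x₁, x₂) ↦ (B x₂, C x₁)`. -/
noncomputable def offDiag (B C : H →L[ℂ] H) :
    WithLp 2 (H × H) →L[ℂ] WithLp 2 (H × H) :=
  ((WithLp.prodContinuousLinearEquiv 2 ℂ H H).symm : (H × H) →L[ℂ] WithLp 2 (H × H)).comp
    (((B.comp (ContinuousLinearMap.snd ℂ H H)).prod
        (C.comp (ContinuousLinearMap.fst ℂ H H))).comp
      ((WithLp.prodContinuousLinearEquiv 2 ℂ H H) : WithLp 2 (H × H) →L[ℂ] H × H))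

section NumRadius

variable {E : Type*} [NormedAddCommGroup E] [InnerProductSpace ℂ E]

theorem numRadius_nonneg (T : E →L[ℂ] E) : 0 ≤ numRadius T :=
  Real.sSup_nonneg fun _ ⟨_, _, hr⟩ ↦ hr ▸ norm_nonneg _

theorem norm_inner_self_le_numRadius (T : E →L[ℂ] E) {x : E} (hx : ‖x‖ = 1) :
    ‖(inner ℂ (T x) x : ℂ)‖ ≤ numRadius T := by
  refine le_csSup ⟨‖T‖, ?_⟩ ⟨x, hx, rfl⟩
  rintro r ⟨y, hy, rfl⟩
  calc ‖(inner ℂ (T y) y : ℂ)‖ ≤ ‖T y‖ * ‖y‖ := norm_inner_le_norm _ _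
    _ ≤ ‖T‖ := by simpa [hy] using T.le_opNorm y

theorem norm_inner_self_le_numRadius_mul_sq (T : E →L[ℂ] E) (x : E) :
    ‖(inner ℂ (T x) x : ℂ)‖ ≤ numRadius T * ‖x‖ ^ 2 := by
  rcases eq_or_ne x 0 with rfl | hx
  · simp
  have hx' : ‖x‖ ≠ 0 := norm_ne_zero_iff.mpr hx
  have hunit : ‖(‖x‖⁻¹ : ℂ) • x‖ = 1 := by simp [norm_smul, hx']
  have h := norm_inner_self_le_numRadius T hunit
  rw [map_smul, inner_smul_left, inner_smul_right, norm_mul, norm_mul] at h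
  simp only [map_inv₀, Complex.conj_ofReal, norm_inv, Complex.norm_real, norm_norm] at h
  calc ‖(inner ℂ (T x) x : ℂ)‖ = ‖x‖ ^ 2 * (‖x‖⁻¹ * (‖x‖⁻¹ * ‖(inner ℂ (T x) x : ℂ)‖)) := by
        field_simp
    _ ≤ numRadius T * ‖x‖ ^ 2 := by rw [mul_comm]; gcongr

end NumRadius

section

omit [CompleteSpace H]

theorem offDiag_toLp (B C : H →L[ℂ] H) (u v : H) :
    offDiag B C (WithLp.toLp 2 (u, v)) = WithLp.toLp 2 (B v, C u) := rfl

theorem inner_offDiag_toLp_self (B C : H →L[ℂ] H) (u v : H) :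
    (inner ℂ (offDiag B C (WithLp.toLp 2 (u, v))) (WithLp.toLp 2 (u, v)) : ℂ) =
      inner ℂ (B v) u + inner ℂ (C u) v := by
  rw [offDiag_toLp, WithLp.prod_inner_apply]

end

theorem norm_add_adjoint_le_two_mul_numRadius (B C : H →L[ℂ] H) :
    ‖B + adjoint C‖ ≤ 2 * numRadius (offDiag B C) := by
  refine opNorm_le_of_re_inner_le (by linarith [numRadius_nonneg (offDiag B C)])
    fun x y hx hy ↦ ?_
  calc RCLike.re (inner ℂ ((B + adjoint C) x) y : ℂ)
      = (inner ℂ (offDiag B C (WithLp.toLp 2 (y, x))) (WithLp.toLp 2 (y, x)) : ℂ).re := by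
        rw [inner_offDiag_toLp_self, add_apply, inner_add_left, adjoint_inner_left, map_add,
          inner_re_symm x]
        rfl
    _ ≤ numRadius (offDiag B C) * ‖WithLp.toLp 2 (y, x)‖ ^ 2 :=
        (Complex.re_le_norm _).trans (norm_inner_self_le_numRadius_mul_sq _ _)
    _ = 2 * numRadius (offDiag B C) := by simp [WithLp.prod_norm_sq_eq_of_L2, hx, hy]; ring

theorem norm_sub_adjoint_le_two_mul_numRadius (B C : H →L[ℂ] H) :
    ‖B - adjoint C‖ ≤ 2 * numRadius (offDiag B C) := by
  refine opNorm_le_of_re_inner_le (by linarith [numRadius_nonneg (offDiag B C)])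
    fun x y hx hy ↦ ?_
  calc RCLike.re (inner ℂ ((B - adjoint C) x) y : ℂ)
      = (inner ℂ (offDiag B C (WithLp.toLp 2 (Complex.I • y, x)))
          (WithLp.toLp 2 (Complex.I • y, x)) : ℂ).im := by
        rw [inner_offDiag_toLp_self, sub_apply, inner_sub_left, adjoint_inner_left, map_sub,
          inner_re_symm x, map_smul, inner_smul_left, inner_smul_right]
        simp [sub_eq_add_neg]
    _ ≤ numRadius (offDiag B C) * ‖WithLp.toLp 2 (Complex.I • y, x)‖ ^ 2 :=
        (Complex.im_le_norm _).trans (norm_inner_self_le_numRadius_mul_sq _ _)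
    _ = 2 * numRadius (offDiag B C) := by
        simp [WithLp.prod_norm_sq_eq_of_L2, norm_smul, hx, hy]; ring

section CStarRing

variable {A : Type*} [NonUnitalNormedRing A] [StarRing A] [CStarRing A] [NormedSpace ℝ A]

theorem two_mul_norm_star_mul_self_add_le (x y : A) :
    2 * ‖star x * x + star y * y‖ ≤ ‖x + y‖ ^ 2 + ‖x - y‖ ^ 2 := by
  have parallelogram : star (x + y) * (x + y) + star (x - y) * (x - y) =
      (2 : ℝ) • (star x * x + star y * y) := by
    rw [star_add, star_sub, two_smul]
    noncomm_ring
  calc 2 * ‖star x * x + star y * y‖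
      = ‖star (x + y) * (x + y) + star (x - y) * (x - y)‖ := by
        rw [parallelogram, norm_smul, Real.norm_two]
    _ ≤ ‖x + y‖ ^ 2 + ‖x - y‖ ^ 2 := by
        simpa only [CStarRing.norm_star_mul_self, sq]
          using norm_add_le (star (x + y) * (x + y)) (star (x - y) * (x - y))

theorem two_mul_norm_self_mul_star_add_le (x y : A) :
    2 * ‖x * star x + y * star y‖ ≤ ‖x + y‖ ^ 2 + ‖x - y‖ ^ 2 := by
  simpa only [star_star, ← star_add, ← star_sub, norm_star]
    using two_mul_norm_star_mul_self_add_le (star x) (star y)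

end CStarRing

theorem opAbs_sq (T : H →L[ℂ] H) : opAbs T ^ 2 = adjoint T * T :=
  CFC.sq_sqrt _ (by rw [← star_eq_adjoint]; exact star_mul_self_nonneg T)

theorem sq_add_sq_le_max_add_mul {a b : ℝ} (ha : 0 ≤ a) (hb : 0 ≤ b) :
    a ^ 2 + b ^ 2 ≤ max (a ^ 2) (b ^ 2) + a * b := by
  rcases le_total a b with h | h
  · rw [max_eq_right (by gcongr)]; nlinarith
  · rw [max_eq_left (by gcongr)]; nlinarith

theorem stmt_7 (B C : H →L[ℂ] H) :
    (1 / 8) * (max (‖B + adjoint C‖ ^ 2) (‖B - adjoint C‖ ^ 2) +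
        ‖B + adjoint C‖ * ‖B - adjoint C‖) ≤ numRadius (offDiag B C) ^ 2 ∧
    (1 / 4) * max ‖opAbs B ^ 2 + opAbs (adjoint C) ^ 2‖ ‖opAbs (adjoint B) ^ 2 + opAbs C ^ 2‖ ≤
      (1 / 8) * (max (‖B + adjoint C‖ ^ 2) (‖B - adjoint C‖ ^ 2) +
        ‖B + adjoint C‖ * ‖B - adjoint C‖) := by
  have hp := norm_add_adjoint_le_two_mul_numRadius B C
  have hm := norm_sub_adjoint_le_two_mul_numRadius B C
  have hp0 := norm_nonneg (B + adjoint C)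
  have hm0 := norm_nonneg (B - adjoint C)
  constructor
  · have hmax : max (‖B + adjoint C‖ ^ 2) (‖B - adjoint C‖ ^ 2) ≤
        (2 * numRadius (offDiag B C)) ^ 2 :=
      max_le (by gcongr) (by gcongr)
    linarith [mul_le_mul hp hm hm0 (hp0.trans hp)]
  · have h₁ := two_mul_norm_star_mul_self_add_le B (adjoint C)
    have h₂ := two_mul_norm_self_mul_star_add_le B (adjoint C)
    simp only [star_eq_adjoint, adjoint_adjoint] at h₁ h₂
    simp only [opAbs_sq, adjoint_adjoint]
    have hmax := max_le_max h₁ h₂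
    rw [max_self, ← mul_max_of_nonneg _ _ zero_le_two] at hmax
    linarith [sq_add_sq_le_max_add_mul hp0 hm0]
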